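/- Let G be a finite simple graph containing nine distinct vertices v0, h, l1, l2, l3, r1, r2, r3, b such that the induced subgraph of G on X = {v0, h, l1, l2, l3, r1, r2, r3, b} has edge set exactly the union of the 4-cycle v0 l3 b r3, the 5-cycle v0 h l1 l2 l3, and the 5-cycle v0 h r1 r2 r3 (that is, exactly the 11 edges v0l3, l3b, br3, r3v0, v0h, hl1, l1l2, l2l3, hr1, r1r2, r2r3), and such that deg_G(v0) = deg_G(l1) = deg_G(r1) = 3 and deg_G(h) = deg_G(l2) = deg_G(l3) = deg_G(r2) = deg_G(r3) = deg_G(b) = 4. If G − X is (2,1)-decomposable, then G is (2,1)-decomposable. -/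

import Mathlib

/-- A graph `G` is `d`-degenerate if every nonempty (induced) subgraph has a
vertex of degree at most `d`. -/
def SimpleGraph.DegenerateLE {V : Type*} (G : SimpleGraph V) (d : ℕ) : Prop :=
  ∀ S : Set V, S.Nonempty → ∃ v ∈ S, (S ∩ G.neighborSet v).ncard ≤ d

/-- A graph `G` is `(d, h)`-decomposable if there is a subgraph `H` of `G` with
maximum degree at most `h` such that `G - E(H)` is `d`-degenerate. -/
def SimpleGraph.IsDecomposable {V : Type*} (G : SimpleGraph V) (d h : ℕ) : Prop :=
  ∃ H : SimpleGraph V, H ≤ G ∧ (∀ v, (H.neighborSet v).ncard ≤ h) ∧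
    (G \ H).DegenerateLE d

/-!
Extend the decomposition `H'` of `G - X` by the matching `v₀h, l₁l₂, l₃b, r₂r₃` inside `X`.
No edge of `H'` meets `X`, so the union still has maximum degree 1. In `G` minus this union the
vertices of `X` can be deleted in the order `v₀, l₃, l₂, r₃, b, l₁, h, r₁, r₂`: at its turn each
has lost its matched partner or enough earlier neighbours to be left with at most two, and what
remains lies in `G - X`, where the decomposition `H'` already provides 2-degeneracy.
-/

namespace SimpleGraph

variable {V : Type*}

theorem encard_neighborSet_sdiff_diff_le {G M : SimpleGraph V} {a : V} {R B : Set V} {d : ℕ}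
    (hBG : B ⊆ G.neighborSet a) (hBR : B ⊆ R ∪ M.neighborSet a) (hB : B.Finite)
    (hdeg : (G.neighborSet a).encard ≤ d + B.encard) :
    ((G \ M).neighborSet a \ R).encard ≤ d := by
  have hsub : (G \ M).neighborSet a \ R ⊆ G.neighborSet a \ B := by
    rintro x ⟨hx, hxR⟩
    rw [mem_neighborSet, sdiff_adj] at hx
    exact ⟨hx.1, fun hxB => (hBR hxB).elim hxR hx.2⟩
  refine (Set.encard_le_encard hsub).trans ?_
  rwa [← ENat.add_le_add_iff_right hB.encard_lt_top.ne,
    Set.encard_sdiff_add_encard_of_subset hBG]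

theorem encard_neighborSet_sdiff_diff_le_of_pair {G M : SimpleGraph V} {a p q : V} {R : Set V}
    {d : ℕ} (hdeg : (G.neighborSet a).ncard = d + 2) (hp : G.Adj a p) (hq : G.Adj a q)
    (hpq : p ≠ q) (hpR : p ∈ R ∨ M.Adj a p) (hqR : q ∈ R ∨ M.Adj a q) :
    ((G \ M).neighborSet a \ R).encard ≤ d := by
  refine encard_neighborSet_sdiff_diff_le (B := {p, q}) ?_ ?_ (Set.toFinite _) ?_
  · simp [Set.insert_subset_iff, hp, hq]
  · simp [Set.insert_subset_iff, hpR, hqR]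
  · rw [Set.encard_pair hpq, ← (Set.finite_of_ncard_ne_zero (by omega)).cast_ncard_eq, hdeg]
    push_cast; rfl

theorem encard_neighborSet_sdiff_diff_le_of_single {G M : SimpleGraph V} {a p : V} {R : Set V}
    {d : ℕ} (hdeg : (G.neighborSet a).ncard = d + 1) (hp : G.Adj a p)
    (hpR : p ∈ R ∨ M.Adj a p) :
    ((G \ M).neighborSet a \ R).encard ≤ d := by
  refine encard_neighborSet_sdiff_diff_le (B := {p}) ?_ ?_ (Set.toFinite _) ?_
  · simpa using hp
  · simpa using hpR
  · rw [Set.encard_singleton, ← (Set.finite_of_ncard_ne_zero (by omega)).cast_ncard_eq, hdeg]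
    push_cast; rfl

/-- `R` is the set of vertices already deleted. -/
def PeelableInOrder (G : SimpleGraph V) (d : ℕ) : List V → Set V → Prop
  | [], _ => True
  | a :: L, R => (G.neighborSet a \ R).encard ≤ d ∧ G.PeelableInOrder d L (insert a R)

theorem PeelableInOrder.exists_encard_inter_neighborSet_le {G : SimpleGraph V} {d : ℕ}
    {L : List V} {R : Set V} (hL : G.PeelableInOrder d L R) {S : Set V} (hSR : Disjoint S R)
    (hSL : ∃ x ∈ L, x ∈ S) : ∃ v ∈ S, (S ∩ G.neighborSet v).encard ≤ d := by
  induction L generalizing R with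
  | nil => simp at hSL
  | cons a L ih =>
    obtain ⟨ha, hL⟩ := hL
    by_cases haS : a ∈ S
    · have hsub : S ∩ G.neighborSet a ⊆ G.neighborSet a \ R := fun y ⟨hyS, hy⟩ =>
        ⟨hy, hSR.notMem_of_mem_left hyS⟩
      exact ⟨a, haS, (Set.encard_le_encard hsub).trans ha⟩
    · obtain ⟨x, hxL, hxS⟩ := hSL
      refine ih hL (Set.disjoint_insert_right.2 ⟨haS, hSR⟩) ⟨x, ?_, hxS⟩
      exact (List.mem_cons.1 hxL).resolve_left (by rintro rfl; exact haS hxS)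

theorem DegenerateLE.exists_mem_ncard_inter_neighborSet_le {G : SimpleGraph V} {s : Set V}
    {d : ℕ} (h : (G.induce s).DegenerateLE d) {S : Set V} (hSs : S ⊆ s) (hS : S.Nonempty) :
    ∃ v ∈ S, (S ∩ G.neighborSet v).ncard ≤ d := by
  obtain ⟨x, hx⟩ := hS
  obtain ⟨v, hv, hvd⟩ := h (Subtype.val ⁻¹' S) ⟨⟨x, hSs hx⟩, hx⟩
  have himage : S ∩ G.neighborSet v =
      Subtype.val '' (Subtype.val ⁻¹' S ∩ (G.induce s).neighborSet v) := by
    ext y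
    constructor
    · rintro ⟨hyS, hy⟩
      exact ⟨⟨y, hSs hyS⟩, ⟨hyS, hy⟩, rfl⟩
    · rintro ⟨y, ⟨hyS, hy⟩, rfl⟩
      exact ⟨hyS, hy⟩
  exact ⟨v, hv, by rwa [himage, Set.ncard_image_of_injective _ Subtype.val_injective]⟩

theorem degenerateLE_of_induce_compl {G : SimpleGraph V} {X : Set V} {d : ℕ}
    (hX : ∀ S : Set V, (S ∩ X).Nonempty → ∃ v ∈ S, (S ∩ G.neighborSet v).ncard ≤ d)
    (hXc : (G.induce Xᶜ).DegenerateLE d) : G.DegenerateLE d := by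
  intro S hS
  by_cases hSX : (S ∩ X).Nonempty
  · exact hX S hSX
  · exact hXc.exists_mem_ncard_inter_neighborSet_le (fun x hx hxX => hSX ⟨x, hx, hxX⟩) hS

theorem ncard_neighborSet_map_le {W : Type*} {G : SimpleGraph V} (f : V ↪ W) {k : ℕ}
    (h : ∀ v, (G.neighborSet v).ncard ≤ k) (w : W) : ((G.map f).neighborSet w).ncard ≤ k := by
  by_cases hw : w ∈ Set.range f
  · obtain ⟨v, rfl⟩ := hw
    rw [neighborSet_map, Set.ncard_image_of_injective _ f.injective]
    exact h v
  · have : (G.map f).neighborSet w = ∅ :=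
      Set.eq_empty_of_forall_notMem fun u hu => by
        obtain ⟨v, _, _, hv, _⟩ := (map_adj f G w u).1 hu
        exact hw ⟨v, hv⟩
    simp [this]

theorem ncard_neighborSet_sup_le {H₁ H₂ : SimpleGraph V} {k : ℕ}
    (hdisj : Disjoint H₁.support H₂.support) (h₁ : ∀ v, (H₁.neighborSet v).ncard ≤ k)
    (h₂ : ∀ v, (H₂.neighborSet v).ncard ≤ k) (v : V) :
    ((H₁ ⊔ H₂).neighborSet v).ncard ≤ k := by
  rw [neighborSet_sup]
  by_cases hv : v ∈ H₁.support
  · have : H₂.neighborSet v = ∅ := Set.eq_empty_of_forall_notMem fun w hw =>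
      hdisj.notMem_of_mem_left hv ⟨w, hw⟩
    rw [this, Set.union_empty]
    exact h₁ v
  · have : H₁.neighborSet v = ∅ := Set.eq_empty_of_forall_notMem fun w hw => hv ⟨w, hw⟩
    rw [this, Set.empty_union]
    exact h₂ v

theorem IsDecomposable.of_induce_compl {G M : SimpleGraph V} {X : Set V} {d k : ℕ}
    (hdec : (G.induce Xᶜ).IsDecomposable d k) (hMG : M ≤ G) (hMX : M.support ⊆ X)
    (hMk : ∀ v, (M.neighborSet v).ncard ≤ k)
    (hpeel : ∀ S : Set V, (S ∩ X).Nonempty →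
      ∃ v ∈ S, (S ∩ (G \ M).neighborSet v).encard ≤ d) :
    G.IsDecomposable d k := by
  obtain ⟨H, hHG, hHk, hHd⟩ := hdec
  have hinduce : (G \ (H.spanningCoe ⊔ M)).induce Xᶜ = G.induce Xᶜ \ H := by
    ext u w
    have hu : (u : V) ∉ X := u.2
    have hw : (w : V) ∉ X := w.2
    have hM : ¬M.Adj u w := fun huw => hu (hMX huw.left_mem_support)
    simp [sdiff_adj, hM, hu, hw]
  have hdisj : Disjoint H.spanningCoe.support M.support := by
    refine Set.disjoint_of_subset_left ?_ (disjoint_compl_left.mono_right hMX)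
    rw [support_spanningCoe]
    exact fun _ ⟨u, _, hu⟩ => hu ▸ u.2
  refine ⟨H.spanningCoe ⊔ M, sup_le ((map_monotone _ hHG).trans (spanningCoe_induce_le G _)) hMG,
    ncard_neighborSet_sup_le hdisj (ncard_neighborSet_map_le _ hHk) hMk,
    degenerateLE_of_induce_compl (fun S hS => ?_) (hinduce ▸ hHd)⟩
  obtain ⟨v, hv, hvd⟩ := hpeel S hS
  have hsub : S ∩ (G \ (H.spanningCoe ⊔ M)).neighborSet v ⊆ S ∩ (G \ M).neighborSet v :=
    Set.inter_subset_inter_right _ (neighborSet_mono (sdiff_le_sdiff_left le_sup_right) v)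
  exact ⟨v, hv, (Set.encard_le_coe_iff_finite_ncard_le.1 ((Set.encard_le_encard hsub).trans hvd)).2⟩

end SimpleGraph

section LightThreeVertex

open SimpleGraph

variable {V : Type*}

def lightEdges (v₀ h l₁ l₂ l₃ r₁ r₂ r₃ b : V) : Set (Sym2 V) :=
  {s(v₀, l₃), s(l₃, b), s(b, r₃), s(r₃, v₀), s(v₀, h), s(h, l₁), s(l₁, l₂), s(l₂, l₃),
    s(h, r₁), s(r₁, r₂), s(r₂, r₃)}

def lightMatching (v₀ h l₁ l₂ l₃ r₂ r₃ b : V) : SimpleGraph V :=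
  fromEdgeSet {s(v₀, h), s(l₁, l₂), s(l₃, b), s(r₂, r₃)}

variable {G : SimpleGraph V} {v₀ h l₁ l₂ l₃ r₁ r₂ r₃ b : V}

theorem lightMatching_le (hE : lightEdges v₀ h l₁ l₂ l₃ r₁ r₂ r₃ b ⊆ G.edgeSet) :
    lightMatching v₀ h l₁ l₂ l₃ r₂ r₃ b ≤ G := by
  refine (fromEdgeSet_le _).2 (Set.sdiff_subset.trans (subset_trans ?_ hE))
  simp [lightEdges, Set.insert_subset_iff]

theorem support_lightMatching_subset :
    (lightMatching v₀ h l₁ l₂ l₃ r₂ r₃ b).support ⊆ {v₀, h, l₁, l₂, l₃, r₁, r₂, r₃, b} := by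
  rintro x ⟨y, hxy⟩
  simp only [lightMatching, fromEdgeSet_adj, Set.mem_insert_iff, Set.mem_singleton_iff,
    Sym2.eq_iff, Set.mem_ofPred_eq] at hxy ⊢
  tauto

theorem ncard_neighborSet_lightMatching_le_one
    (hne : [v₀, h, l₁, l₂, l₃, r₁, r₂, r₃, b].Pairwise (· ≠ ·)) (v : V) :
    ((lightMatching v₀ h l₁ l₂ l₃ r₂ r₃ b).neighborSet v).ncard ≤ 1 := by
  simp only [List.pairwise_cons, List.mem_cons, List.not_mem_nil] at hne
  have hs : ((lightMatching v₀ h l₁ l₂ l₃ r₂ r₃ b).neighborSet v).Subsingleton := by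
    rintro x hx y hy
    simp only [lightMatching, mem_neighborSet, fromEdgeSet_adj, Set.mem_insert_iff,
      Set.mem_singleton_iff, Sym2.eq_iff] at hx hy
    grind
  exact (Set.ncard_le_one hs.finite).2 hs

theorem peelableInOrder_lightMatching (hE : lightEdges v₀ h l₁ l₂ l₃ r₁ r₂ r₃ b ⊆ G.edgeSet)
    (hne : [v₀, h, l₁, l₂, l₃, r₁, r₂, r₃, b].Pairwise (· ≠ ·))
    (hdv₀ : (G.neighborSet v₀).ncard = 3) (hdh : (G.neighborSet h).ncard = 4)
    (hdl₁ : (G.neighborSet l₁).ncard = 3) (hdl₂ : (G.neighborSet l₂).ncard = 4)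
    (hdl₃ : (G.neighborSet l₃).ncard = 4)
    (hdr₁ : (G.neighborSet r₁).ncard = 3) (hdr₂ : (G.neighborSet r₂).ncard = 4)
    (hdr₃ : (G.neighborSet r₃).ncard = 4) (hdb : (G.neighborSet b).ncard = 4) :
    (G \ lightMatching v₀ h l₁ l₂ l₃ r₂ r₃ b).PeelableInOrder 2
      [v₀, l₃, l₂, r₃, b, l₁, h, r₁, r₂] ∅ := by
  have adj {x y : V} (hxy : s(x, y) ∈ lightEdges v₀ h l₁ l₂ l₃ r₁ r₂ r₃ b) : G.Adj x y := hE hxy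
  have matched {x y : V}
      (hxy : s(x, y) ∈ ({s(v₀, h), s(l₁, l₂), s(l₃, b), s(r₂, r₃)} : Set (Sym2 V)))
      (hG : G.Adj x y) : (lightMatching v₀ h l₁ l₂ l₃ r₂ r₃ b).Adj x y := ⟨hxy, hG.ne⟩
  have hv₀l₃ : G.Adj v₀ l₃ := adj (by simp [lightEdges])
  have hl₃b : G.Adj l₃ b := adj (by simp [lightEdges])
  have hbr₃ : G.Adj b r₃ := adj (by simp [lightEdges])
  have hr₃v₀ : G.Adj r₃ v₀ := adj (by simp [lightEdges])
  have hv₀h : G.Adj v₀ h := adj (by simp [lightEdges])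
  have hhl₁ : G.Adj h l₁ := adj (by simp [lightEdges])
  have hl₁l₂ : G.Adj l₁ l₂ := adj (by simp [lightEdges])
  have hl₂l₃ : G.Adj l₂ l₃ := adj (by simp [lightEdges])
  have hhr₁ : G.Adj h r₁ := adj (by simp [lightEdges])
  have hr₁r₂ : G.Adj r₁ r₂ := adj (by simp [lightEdges])
  have hr₂r₃ : G.Adj r₂ r₃ := adj (by simp [lightEdges])
  simp only [List.pairwise_cons, List.mem_cons, List.not_mem_nil] at hne
  refine ⟨?_, ?_, ?_, ?_, ?_, ?_, ?_, ?_, ?_, trivial⟩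
  · exact encard_neighborSet_sdiff_diff_le_of_single hdv₀ hv₀h (.inr (matched (by simp) hv₀h))
  · exact encard_neighborSet_sdiff_diff_le_of_pair hdl₃ hv₀l₃.symm hl₃b (by grind)
      (.inl (by simp)) (.inr (matched (by simp) hl₃b))
  · exact encard_neighborSet_sdiff_diff_le_of_pair hdl₂ hl₂l₃ hl₁l₂.symm (by grind)
      (.inl (by simp)) (.inr (matched (by simp) hl₁l₂.symm))
  · exact encard_neighborSet_sdiff_diff_le_of_pair hdr₃ hr₃v₀ hr₂r₃.symm (by grind)
      (.inl (by simp)) (.inr (matched (by simp) hr₂r₃.symm))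
  · exact encard_neighborSet_sdiff_diff_le_of_pair hdb hl₃b.symm hbr₃ (by grind)
      (.inl (by simp)) (.inl (by simp))
  · exact encard_neighborSet_sdiff_diff_le_of_single hdl₁ hl₁l₂ (.inr (matched (by simp) hl₁l₂))
  · exact encard_neighborSet_sdiff_diff_le_of_pair hdh hv₀h.symm hhl₁ (by grind)
      (.inr (matched (by simp) hv₀h.symm)) (.inl (by simp))
  · exact encard_neighborSet_sdiff_diff_le_of_single hdr₁ hhr₁.symm (.inl (by simp))
  · exact encard_neighborSet_sdiff_diff_le_of_pair hdr₂ hr₁r₂.symm hr₂r₃ (by grind)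
      (.inl (by simp)) (.inr (matched (by simp) hr₂r₃))

end LightThreeVertex

theorem statement7_general {V : Type*} (G : SimpleGraph V)
    (v₀ h l₁ l₂ l₃ r₁ r₂ r₃ b : V)
    (hne : [v₀, h, l₁, l₂, l₃, r₁, r₂, r₃, b].Pairwise (· ≠ ·))
    (hind : ∀ x ∈ ({v₀, h, l₁, l₂, l₃, r₁, r₂, r₃, b} : Set V),
      ∀ y ∈ ({v₀, h, l₁, l₂, l₃, r₁, r₂, r₃, b} : Set V),
      (G.Adj x y ↔ s(x, y) ∈
        ({s(v₀, l₃), s(l₃, b), s(b, r₃), s(r₃, v₀), s(v₀, h), s(h, l₁), s(l₁, l₂),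
          s(l₂, l₃), s(h, r₁), s(r₁, r₂), s(r₂, r₃)} : Set (Sym2 V))))
    (hdv₀ : (G.neighborSet v₀).ncard = 3) (hdh : (G.neighborSet h).ncard = 4)
    (hdl₁ : (G.neighborSet l₁).ncard = 3) (hdl₂ : (G.neighborSet l₂).ncard = 4)
    (hdl₃ : (G.neighborSet l₃).ncard = 4)
    (hdr₁ : (G.neighborSet r₁).ncard = 3) (hdr₂ : (G.neighborSet r₂).ncard = 4)
    (hdr₃ : (G.neighborSet r₃).ncard = 4) (hdb : (G.neighborSet b).ncard = 4)
    (hdec : (G.induce (({v₀, h, l₁, l₂, l₃, r₁, r₂, r₃, b} : Set V)ᶜ)).IsDecomposable 2 1) :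
    G.IsDecomposable 2 1 := by
  have hE : lightEdges v₀ h l₁ l₂ l₃ r₁ r₂ r₃ b ⊆ G.edgeSet := by
    intro e he
    simp only [lightEdges, Set.mem_insert_iff, Set.mem_singleton_iff] at he
    rcases he with rfl | rfl | rfl | rfl | rfl | rfl | rfl | rfl | rfl | rfl | rfl <;>
      exact (hind _ (by simp) _ (by simp)).2 (by simp)
  refine hdec.of_induce_compl (lightMatching_le hE) support_lightMatching_subset
    (ncard_neighborSet_lightMatching_le_one hne) fun S ⟨x, hxS, hxX⟩ => ?_
  refine (peelableInOrder_lightMatching hE hne hdv₀ hdh hdl₁ hdl₂ hdl₃ hdr₁ hdr₂ hdr₃ hdb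
    ).exists_encard_inter_neighborSet_le (Set.disjoint_empty S) ⟨x, ?_, hxS⟩
  simp only [Set.mem_insert_iff, Set.mem_singleton_iff] at hxX
  simp only [List.mem_cons, List.not_mem_nil, or_false]
  tauto

/-- Reducible 'light 3-vertex' configuration of Figure 4(a): a 4-cycle
`v₀ l₃ b r₃` together with the 5-cycles `v₀ h l₁ l₂ l₃` and `v₀ h r₁ r₂ r₃`,
inducing exactly these eleven edges. -/
theorem statement7 {V : Type*} [Fintype V] (G : SimpleGraph V)
    (v₀ h l₁ l₂ l₃ r₁ r₂ r₃ b : V)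
    (hne : [v₀, h, l₁, l₂, l₃, r₁, r₂, r₃, b].Pairwise (· ≠ ·))
    (hind : ∀ x ∈ ({v₀, h, l₁, l₂, l₃, r₁, r₂, r₃, b} : Set V),
      ∀ y ∈ ({v₀, h, l₁, l₂, l₃, r₁, r₂, r₃, b} : Set V),
      (G.Adj x y ↔ s(x, y) ∈
        ({s(v₀, l₃), s(l₃, b), s(b, r₃), s(r₃, v₀), s(v₀, h), s(h, l₁), s(l₁, l₂),
          s(l₂, l₃), s(h, r₁), s(r₁, r₂), s(r₂, r₃)} : Set (Sym2 V))))
    (hdv₀ : (G.neighborSet v₀).ncard = 3) (hdh : (G.neighborSet h).ncard = 4)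
    (hdl₁ : (G.neighborSet l₁).ncard = 3) (hdl₂ : (G.neighborSet l₂).ncard = 4)
    (hdl₃ : (G.neighborSet l₃).ncard = 4)
    (hdr₁ : (G.neighborSet r₁).ncard = 3) (hdr₂ : (G.neighborSet r₂).ncard = 4)
    (hdr₃ : (G.neighborSet r₃).ncard = 4) (hdb : (G.neighborSet b).ncard = 4)
    (hdec : (G.induce (({v₀, h, l₁, l₂, l₃, r₁, r₂, r₃, b} : Set V)ᶜ)).IsDecomposable 2 1) :
    G.IsDecomposable 2 1 :=
  statement7_general G v₀ h l₁ l₂ l₃ r₁ r₂ r₃ b hne hind hdv₀ hdh hdl₁ hdl₂ hdl₃ hdr₁ hdr₂ hdr₃ hdb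
    hdec
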